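/- Let 0 < s < 1, λ₀ > 0, σ' ∈ ℝ, σ ∈ ℝ, and let λ : [0,∞) → (0, λ₀] be any function. Define A_k(t, η) = exp(λ(t)·⟨|k| + |η|⟩^s)·⟨|k| + |η|⟩^(σ+σ') for k ∈ ℤ, η ∈ ℝ, where ⟨x⟩ = (1+x²)^(1/2). Then for each n ∈ ℕ there is a constant C depending only on n, λ₀, s, σ, σ' such that for all t ≥ 0, k ∈ ℤ, η ∈ ℝ, |∂_η^n A_k(t, η)| ≤ C·⟨|k| + |η|⟩^(-n(1-s))·A_k(t, η). -/

import Mathlib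

/-!
Write `A_k(t, η) = G(|k| + |η|)` with `G(u) = exp(λ ⟨u⟩ ^ s) ⟨u⟩ ^ τ`, `τ = σ + σ'`. Away from
`η = 0` the derivatives of `η ↦ G(|k| + |η|)` are those of `G` up to sign, and at `η = 0` a
derivative, if it exists, equals the one-sided one; so it suffices to bound the derivatives of `G`.
Now `G' = P G` with `P(u) = λ s u ⟨u⟩ ^ (s - 2) + τ u ⟨u⟩ ^ (-2)`, and each derivative of
`u ^ a ⟨u⟩ ^ β` gains a factor `⟨u⟩⁻¹`, so `|P⁽ʲ⁾| ≲ ⟨u⟩ ^ (-(j + 1)(1 - s))` for `s ≥ 0`, uniformly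
in `|λ| ≤ λ₀`. Leibniz's rule for `(P G)⁽ⁿ⁻¹⁾` and induction give `|G⁽ⁿ⁾| ≲ ⟨u⟩ ^ (-n(1 - s)) G`.
-/

/-- Japanese bracket. -/
noncomputable def jb (x : ℝ) : ℝ := Real.sqrt (1 + x ^ 2)

/-- The Gevrey Fourier multiplier `A_k^{(σ')}(t,η)` in one frequency dimension. -/
noncomputable def Amult (lam : ℝ → ℝ) (s σ σ' : ℝ) (k : ℤ) (t η : ℝ) : ℝ :=
  Real.exp (lam t * jb (|(k : ℝ)| + |η|) ^ s) * jb (|(k : ℝ)| + |η|) ^ (σ + σ')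

open Filter Topology
open scoped ContDiff

lemma iteratedDeriv_const_mul_add_const_mul {f g : ℝ → ℝ} {n : ℕ} {x : ℝ}
    (hf : ContDiffAt ℝ n f x) (hg : ContDiffAt ℝ n g x) (a b : ℝ) :
    iteratedDeriv n (fun u => a * f u + b * g u) x =
      a * iteratedDeriv n f x + b * iteratedDeriv n g x := by
  rw [iteratedDeriv_fun_add (contDiffAt_const.mul hf) (contDiffAt_const.mul hg),
    iteratedDeriv_const_mul_field, iteratedDeriv_const_mul_field]

lemma jb_pos (u : ℝ) : 0 < jb u := Real.sqrt_pos.2 (by positivity)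

lemma abs_le_jb (u : ℝ) : |u| ≤ jb u := by
  rw [← Real.sqrt_sq_eq_abs]
  exact Real.sqrt_le_sqrt (by linarith)

lemma one_le_jb (u : ℝ) : 1 ≤ jb u := by
  rw [← Real.sqrt_one]
  exact Real.sqrt_le_sqrt (by nlinarith [sq_nonneg u])

lemma contDiff_jb_rpow (r : ℝ) : ContDiff ℝ ∞ fun u => jb u ^ r :=
  ((contDiff_const.add (contDiff_id.pow 2)).sqrt fun u => by positivity).rpow_const_of_ne
    fun u => (jb_pos u).ne'

lemma hasDerivAt_jb_rpow (r u : ℝ) :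
    HasDerivAt (fun v => jb v ^ r) (r * u * jb u ^ (r - 2)) u := by
  have hsq : HasDerivAt jb (u / jb u) u := by
    convert ((hasDerivAt_pow 2 u).const_add 1).sqrt (by positivity : (1 : ℝ) + u ^ 2 ≠ 0) using 1
    · rfl
    · unfold jb
      field_simp
      ring
  convert hsq.rpow_const (p := r) (Or.inl (jb_pos u).ne') using 1
  rw [Real.rpow_sub (jb_pos u), Real.rpow_sub_one (jb_pos u).ne', Real.rpow_two]
  field_simp

noncomputable def jbMonomial (a : ℕ) (β : ℝ) (u : ℝ) : ℝ := u ^ a * jb u ^ β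

lemma contDiff_jbMonomial (a : ℕ) (β : ℝ) : ContDiff ℝ ∞ (jbMonomial a β) :=
  (contDiff_id.pow a).mul (contDiff_jb_rpow β)

lemma deriv_jbMonomial (a : ℕ) (β : ℝ) :
    deriv (jbMonomial a β) =
      fun u => a * jbMonomial (a - 1) β u + β * jbMonomial (a + 1) (β - 2) u := by
  ext u
  refine (((hasDerivAt_pow a u).mul (hasDerivAt_jb_rpow β u)).congr_deriv ?_).deriv
  simp only [jbMonomial]
  ring

lemma abs_jbMonomial_le (a : ℕ) (β u : ℝ) : |jbMonomial a β u| ≤ jb u ^ ((a : ℝ) + β) := by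
  rw [jbMonomial, abs_mul, abs_pow, abs_of_pos (Real.rpow_pos_of_pos (jb_pos u) β),
    Real.rpow_add (jb_pos u), Real.rpow_natCast]
  exact mul_le_mul_of_nonneg_right (pow_le_pow_left₀ (abs_nonneg u) (abs_le_jb u) a)
    (Real.rpow_nonneg (jb_pos u).le β)

lemma abs_iteratedDeriv_jbMonomial_le (j a : ℕ) (β : ℝ) :
    ∃ C, ∀ u, |iteratedDeriv j (jbMonomial a β) u| ≤ C * jb u ^ ((a : ℝ) + β - j) := by
  induction j generalizing a β with
  | zero => exact ⟨1, fun u => by simpa using abs_jbMonomial_le a β u⟩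
  | succ j ih =>
    obtain ⟨C₁, h₁⟩ := ih (a - 1) β
    obtain ⟨C₂, h₂⟩ := ih (a + 1) (β - 2)
    refine ⟨a * C₁ + |β| * C₂, fun u => ?_⟩
    set E : ℝ := a + β - (j + 1 : ℕ)
    have hsplit : iteratedDeriv (j + 1) (jbMonomial a β) u =
        a * iteratedDeriv j (jbMonomial (a - 1) β) u
          + β * iteratedDeriv j (jbMonomial (a + 1) (β - 2)) u := by
      rw [iteratedDeriv_succ', deriv_jbMonomial]
      exact iteratedDeriv_const_mul_add_const_mul
        (contDiff_infty.1 (contDiff_jbMonomial _ _) j).contDiffAt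
        (contDiff_infty.1 (contDiff_jbMonomial _ _) j).contDiffAt _ _
    have hterm₁ : a * |iteratedDeriv j (jbMonomial (a - 1) β) u| ≤ a * C₁ * jb u ^ E := by
      rcases Nat.eq_zero_or_pos a with rfl | ha
      · simp
      · have hE : ((a - 1 : ℕ) : ℝ) + β - j = E := by
          simp only [E, Nat.cast_sub ha]; push_cast; ring
        rw [mul_assoc, ← hE]
        exact mul_le_mul_of_nonneg_left (h₁ u) a.cast_nonneg
    have hterm₂ :
        |β| * |iteratedDeriv j (jbMonomial (a + 1) (β - 2)) u| ≤ |β| * C₂ * jb u ^ E := by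
      have hE : ((a + 1 : ℕ) : ℝ) + (β - 2) - j = E := by simp only [E]; push_cast; ring
      rw [mul_assoc, ← hE]
      exact mul_le_mul_of_nonneg_left (h₂ u) (abs_nonneg β)
    calc |iteratedDeriv (j + 1) (jbMonomial a β) u|
        ≤ a * |iteratedDeriv j (jbMonomial (a - 1) β) u|
          + |β| * |iteratedDeriv j (jbMonomial (a + 1) (β - 2)) u| := by
          rw [hsplit]
          refine (abs_add_le _ _).trans_eq ?_
          rw [abs_mul, abs_mul, Nat.abs_cast]
      _ ≤ (a * C₁ + |β| * C₂) * jb u ^ E := by linarith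

noncomputable def gevreyWeight (l s τ u : ℝ) : ℝ := Real.exp (l * jb u ^ s) * jb u ^ τ

noncomputable def gevreyLogDeriv (l s τ u : ℝ) : ℝ :=
  l * s * jbMonomial 1 (s - 2) u + τ * jbMonomial 1 (-2) u

lemma gevreyWeight_pos (l s τ u : ℝ) : 0 < gevreyWeight l s τ u :=
  mul_pos (Real.exp_pos _) (Real.rpow_pos_of_pos (jb_pos u) τ)

lemma contDiff_gevreyWeight (l s τ : ℝ) : ContDiff ℝ ∞ (gevreyWeight l s τ) :=
  (Real.contDiff_exp.comp (contDiff_const.mul (contDiff_jb_rpow s))).mul (contDiff_jb_rpow τ)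

lemma contDiff_gevreyLogDeriv (l s τ : ℝ) : ContDiff ℝ ∞ (gevreyLogDeriv l s τ) :=
  (contDiff_const.mul (contDiff_jbMonomial 1 _)).add (contDiff_const.mul (contDiff_jbMonomial 1 _))

lemma deriv_gevreyWeight (l s τ : ℝ) :
    deriv (gevreyWeight l s τ) = fun u => gevreyLogDeriv l s τ u * gevreyWeight l s τ u := by
  ext u
  refine ((((hasDerivAt_jb_rpow s u).const_mul l).exp.mul (hasDerivAt_jb_rpow τ u)).congr_deriv
    ?_).deriv
  simp only [gevreyLogDeriv, gevreyWeight, jbMonomial, pow_one]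
  rw [sub_eq_add_neg τ, Real.rpow_add (jb_pos u)]
  ring

/- Bounds uniform in a parameter are stated as `∀ᶠ C in atTop`, so that finitely many of them
combine into one through `eventually_all_finset`. -/
lemma abs_iteratedDeriv_gevreyLogDeriv_le {s : ℝ} (hs : 0 ≤ s) (lam0 τ : ℝ) (j : ℕ) :
    ∀ᶠ C in atTop, ∀ l, |l| ≤ lam0 → ∀ u,
      |iteratedDeriv j (gevreyLogDeriv l s τ) u| ≤ C * jb u ^ (-((j : ℝ) + 1) * (1 - s)) := by
  obtain ⟨C₁, h₁⟩ := abs_iteratedDeriv_jbMonomial_le j 1 (s - 2)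
  obtain ⟨C₂, h₂⟩ := abs_iteratedDeriv_jbMonomial_le j 1 (-2)
  filter_upwards [eventually_ge_atTop (lam0 * |s| * |C₁| + |τ| * |C₂|)] with C hC l hl u
  set E : ℝ := -((j : ℝ) + 1) * (1 - s)
  have hmono : ∀ {β C : ℝ}, β ≤ E → ∀ D, |D| ≤ C * jb u ^ β → |D| ≤ |C| * jb u ^ E :=
    fun hβ D hD => hD.trans (mul_le_mul (le_abs_self _)
      (Real.rpow_le_rpow_of_exponent_le (one_le_jb u) hβ) (Real.rpow_nonneg (jb_pos u).le _)
      (abs_nonneg _))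
  have hj : (0 : ℝ) ≤ j * s := mul_nonneg j.cast_nonneg hs
  have b₁ := hmono (by simp only [E]; push_cast; nlinarith) _ (h₁ u)
  have b₂ := hmono (by simp only [E]; push_cast; nlinarith) _ (h₂ u)
  have hsplit : iteratedDeriv j (gevreyLogDeriv l s τ) u =
      l * s * iteratedDeriv j (jbMonomial 1 (s - 2)) u
        + τ * iteratedDeriv j (jbMonomial 1 (-2)) u :=
    iteratedDeriv_const_mul_add_const_mul
      (contDiff_infty.1 (contDiff_jbMonomial _ _) j).contDiffAt
      (contDiff_infty.1 (contDiff_jbMonomial _ _) j).contDiffAt _ _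
  rw [hsplit]
  calc _ ≤ |l| * |s| * |iteratedDeriv j (jbMonomial 1 (s - 2)) u|
        + |τ| * |iteratedDeriv j (jbMonomial 1 (-2)) u| := by
        refine (abs_add_le _ _).trans_eq ?_
        rw [abs_mul, abs_mul, abs_mul]
    _ ≤ lam0 * |s| * (|C₁| * jb u ^ E) + |τ| * (|C₂| * jb u ^ E) := by
        have : 0 ≤ lam0 := (abs_nonneg l).trans hl
        gcongr
    _ = (lam0 * |s| * |C₁| + |τ| * |C₂|) * jb u ^ E := by ring
    _ ≤ C * jb u ^ E := mul_le_mul_of_nonneg_right hC (Real.rpow_nonneg (jb_pos u).le _)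

theorem abs_iteratedDeriv_gevreyWeight_le {s : ℝ} (hs : 0 ≤ s) (lam0 τ : ℝ) (n : ℕ) :
    ∀ᶠ C in atTop, ∀ l, |l| ≤ lam0 → ∀ u, |iteratedDeriv n (gevreyWeight l s τ) u| ≤
      C * jb u ^ (-(n : ℝ) * (1 - s)) * gevreyWeight l s τ u := by
  induction n using Nat.strong_induction_on with
  | _ n ih =>
  rcases n with _ | m
  · filter_upwards [eventually_ge_atTop 1] with C hC l hl u
    simpa [abs_of_pos (gevreyWeight_pos l s τ u)] using
      le_mul_of_one_le_left (gevreyWeight_pos l s τ u).le hC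
  obtain ⟨C, hC₀, hC⟩ := ((eventually_ge_atTop 0).and
    ((eventually_all_finset (Finset.range (m + 1))).2 fun i hi =>
      (abs_iteratedDeriv_gevreyLogDeriv_le hs lam0 τ i).and
        (ih (m - i) (by simp at hi; omega)))).exists
  filter_upwards [eventually_ge_atTop (2 ^ m * C ^ 2)] with C' hC' l hl u
  set E : ℝ := -((m + 1 : ℕ) : ℝ) * (1 - s)
  set G := gevreyWeight l s τ
  have hterm : ∀ i ∈ Finset.range (m + 1),
      |m.choose i * iteratedDeriv i (gevreyLogDeriv l s τ) u * iteratedDeriv (m - i) G u| ≤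
        m.choose i * (C ^ 2 * (jb u ^ E * G u)) := by
    intro i hi
    have hi' : i ≤ m := Nat.lt_succ_iff.1 (Finset.mem_range.1 hi)
    have hE : jb u ^ (-((i : ℝ) + 1) * (1 - s)) * jb u ^ (-((m - i : ℕ) : ℝ) * (1 - s)) =
        jb u ^ E := by
      rw [← Real.rpow_add (jb_pos u), Nat.cast_sub hi']
      simp only [E]; push_cast; congr 1; ring
    rw [abs_mul, abs_mul, Nat.abs_cast, mul_assoc]
    refine mul_le_mul_of_nonneg_left ?_ (Nat.cast_nonneg _)
    calc _ ≤ (C * jb u ^ (-((i : ℝ) + 1) * (1 - s))) *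
          (C * jb u ^ (-((m - i : ℕ) : ℝ) * (1 - s)) * G u) :=
          mul_le_mul ((hC i hi).1 l hl u) ((hC i hi).2 l hl u) (abs_nonneg _)
            (mul_nonneg hC₀ (Real.rpow_nonneg (jb_pos u).le _))
      _ = C ^ 2 * (jb u ^ E * G u) := by rw [← hE]; ring
  calc |iteratedDeriv (m + 1) G u|
      = |∑ i ∈ Finset.range (m + 1),
          m.choose i * iteratedDeriv i (gevreyLogDeriv l s τ) u * iteratedDeriv (m - i) G u| := by
        rw [iteratedDeriv_succ', deriv_gevreyWeight, iteratedDeriv_fun_mul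
          (contDiff_infty.1 (contDiff_gevreyLogDeriv l s τ) m).contDiffAt
          (contDiff_infty.1 (contDiff_gevreyWeight l s τ) m).contDiffAt]
    _ ≤ ∑ i ∈ Finset.range (m + 1), m.choose i * (C ^ 2 * (jb u ^ E * G u)) :=
        (Finset.abs_sum_le_sum_abs _ _).trans (Finset.sum_le_sum hterm)
    _ = 2 ^ m * C ^ 2 * (jb u ^ E * G u) := by
        rw [← Finset.sum_mul, ← Nat.cast_sum, Nat.sum_range_choose]; push_cast; ring
    _ ≤ C' * jb u ^ E * G u := by
        rw [mul_assoc C']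
        exact mul_le_mul_of_nonneg_right hC'
          (mul_nonneg (Real.rpow_nonneg (jb_pos u).le _) (gevreyWeight_pos l s τ u).le)

lemma deriv_eq_of_eventuallyEq_nhdsGT {f g : ℝ → ℝ} {x : ℝ} (hf : DifferentiableAt ℝ f x)
    (hg : DifferentiableAt ℝ g x) (hfg : f =ᶠ[𝓝[>] x] g) : deriv f x = deriv g x := by
  have hx : f x = g x :=
    tendsto_nhds_unique (hf.continuousAt.tendsto.mono_left nhdsWithin_le_nhds)
      ((hg.continuousAt.tendsto.mono_left nhdsWithin_le_nhds).congr' hfg.symm)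
  exact (uniqueDiffWithinAt_Ioi x).eq_deriv _ hf.hasDerivAt.hasDerivWithinAt
    (hg.hasDerivAt.hasDerivWithinAt.congr_of_eventuallyEq hfg hx)

lemma iteratedDeriv_comp_const_add_abs_of_pos (G : ℝ → ℝ) (n : ℕ) (c : ℝ) {η : ℝ}
    (hη : 0 < η) :
    iteratedDeriv n (fun y => G (c + |y|)) η = iteratedDeriv n G (c + η) := by
  have h : (fun y => G (c + |y|)) =ᶠ[𝓝 η] fun y => G (c + y) := by
    filter_upwards [lt_mem_nhds hη] with y hy
    rw [abs_of_pos hy]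
  rw [h.iteratedDeriv_eq, iteratedDeriv_comp_const_add]

lemma abs_iteratedDeriv_comp_const_add_abs_le {G : ℝ → ℝ} {n : ℕ} (hG : ContDiff ℝ n G)
    (c η : ℝ) :
    |iteratedDeriv n (fun y => G (c + |y|)) η| ≤ |iteratedDeriv n G (c + |η|)| := by
  rcases lt_trichotomy η 0 with hη | rfl | hη
  · have h : (fun y => G (c + |y|)) =ᶠ[𝓝 η] fun y => G (c + -y) := by
      filter_upwards [gt_mem_nhds hη] with y hy
      rw [abs_of_neg hy]
    rw [h.iteratedDeriv_eq, iteratedDeriv_comp_neg n (fun y => G (c + y)),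
      iteratedDeriv_comp_const_add, abs_of_neg hη, smul_eq_mul, abs_mul, abs_pow, abs_neg,
      abs_one, one_pow, one_mul]
  · rcases n with _ | m
    · simp
    rw [iteratedDeriv_succ]
    by_cases hdiff : DifferentiableAt ℝ (iteratedDeriv m fun y => G (c + |y|)) 0
    · have hright : DifferentiableAt ℝ (fun y => iteratedDeriv m G (c + y)) 0 :=
        ((hG.differentiable_iteratedDeriv' m).differentiableAt).comp 0
          ((differentiableAt_const c).add differentiableAt_id)
      rw [deriv_eq_of_eventuallyEq_nhdsGT hdiff hright (eventually_nhdsWithin_of_forall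
        fun y hy => iteratedDeriv_comp_const_add_abs_of_pos G m c hy),
        ← iteratedDeriv_comp_const_add, ← iteratedDeriv_succ, iteratedDeriv_comp_const_add]
      simp
    · rw [deriv_zero_of_not_differentiableAt hdiff, abs_zero]
      exact abs_nonneg _
  · rw [iteratedDeriv_comp_const_add_abs_of_pos G n c hη, abs_of_pos hη]

theorem stmt_11_general (s lam0 σ σ' : ℝ) (hs0 : 0 < s)
    (n : ℕ) :
    ∃ C : ℝ, 0 < C ∧
      ∀ lam : ℝ → ℝ, (∀ t : ℝ, 0 ≤ t → 0 < lam t ∧ lam t ≤ lam0) →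
        ∀ t : ℝ, 0 ≤ t → ∀ k : ℤ, ∀ η : ℝ,
          |iteratedDeriv n (fun y => Amult lam s σ σ' k t y) η| ≤
            C * jb (|(k : ℝ)| + |η|) ^ (-(n : ℝ) * (1 - s)) * Amult lam s σ σ' k t η := by
  obtain ⟨C, hC, hC₀⟩ :=
    ((abs_iteratedDeriv_gevreyWeight_le hs0.le lam0 (σ + σ') n).and (eventually_gt_atTop 0)).exists
  refine ⟨C, hC₀, fun lam hlam t ht k η => ?_⟩
  obtain ⟨hlam_pos, hlam_le⟩ := hlam t ht
  have hA : (fun y => Amult lam s σ σ' k t y) =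
      fun y => gevreyWeight (lam t) s (σ + σ') (|(k : ℝ)| + |y|) := rfl
  rw [hA]
  exact (abs_iteratedDeriv_comp_const_add_abs_le
    (contDiff_infty.1 (contDiff_gevreyWeight (lam t) s (σ + σ')) n) |(k : ℝ)| η).trans
    (hC (lam t) (abs_le.2 ⟨by linarith, hlam_le⟩) _)

theorem stmt_11 (s lam0 σ σ' : ℝ) (hs0 : 0 < s) (hs1 : s < 1) (hlam0 : 0 < lam0)
    (n : ℕ) :
    ∃ C : ℝ, 0 < C ∧
      ∀ lam : ℝ → ℝ, (∀ t : ℝ, 0 ≤ t → 0 < lam t ∧ lam t ≤ lam0) →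
        ∀ t : ℝ, 0 ≤ t → ∀ k : ℤ, ∀ η : ℝ,
          |iteratedDeriv n (fun y => Amult lam s σ σ' k t y) η| ≤
            C * jb (|(k : ℝ)| + |η|) ^ (-(n : ℝ) * (1 - s)) * Amult lam s σ σ' k t η :=
  stmt_11_general s lam0 σ σ' hs0 n
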